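/- arXiv:2401.16198 — 2 statements merged into one kernel-verified Lean document; each statement's English description precedes it below -/
import Mathlib

section
/- Let π = ((α^1, τ^1, a^1), …, (α^K, τ^K, a^K)) be a valid dynamic linear contract and suppose that during segment k the agent is indifferent between actions i and i+1, i.e., {i, i+1} ⊆ BR(ᾱ^{k−1}) ∩ BR(ᾱ^k) if k ≥ 2 (respectively {i, i+1} ⊆ BR(ᾱ^1) if k = 1), and that a^k = i. Then the sequence π′ obtained from π by replacing a^k with i+1 is a valid dynamic linear contract and Util(π′) ≥ Util(π). -/
open Finset

/-- Indifference point `α_{i,i+1}` between actions `i` and `i+1`. -/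
noncomputable def indiff (c R : ℕ → ℝ) (i : ℕ) : ℝ :=
  (c (i + 1) - c i) / (R (i + 1) - R i)

/-- Breakpoint `α_{i,i+1}` with the convention `α_{0,1} := 0`. -/
noncomputable def bp (c R : ℕ → ℝ) (i : ℕ) : ℝ :=
  if i = 0 then 0 else indiff c R i

/-- A linear contract instance with `n ≥ 2` actions indexed `1,…,n`:
costs `0 = c_1 < … < c_n`, rewards `0 ≤ R_1 < … < R_n`, and indifference
points satisfying `0 < α_{1,2} < … < α_{n-1,n} ≤ 1`. -/
def LinInstance (n : ℕ) (c R : ℕ → ℝ) : Prop :=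
  2 ≤ n ∧ c 1 = 0 ∧ 0 ≤ R 1 ∧
    (∀ i, 1 ≤ i → i < n → c i < c (i + 1)) ∧
    (∀ i, 1 ≤ i → i < n → R i < R (i + 1)) ∧
    0 < indiff c R 1 ∧
    (∀ i, 1 ≤ i → i + 1 ≤ n - 1 → indiff c R i < indiff c R (i + 1)) ∧
    indiff c R (n - 1) ≤ 1

/-- Best-response set of the agent to the linear contract with scalar `x`. -/
def BR (n : ℕ) (c R : ℕ → ℝ) (x : ℝ) : Set ℕ :=
  {i | i ∈ Finset.Icc 1 n ∧ ∀ j ∈ Finset.Icc 1 n, x * R j - c j ≤ x * R i - c i}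

/-- A dynamic linear contract with `K` segments (indexed `1,…,K`):
scalars `α`, durations `τ`, and actions `a`. -/
structure DLC where
  K : ℕ
  α : ℕ → ℝ
  τ : ℕ → ℝ
  a : ℕ → ℕ

namespace DLC

/-- Total duration of the first `k` segments. -/
noncomputable def Tsum (π : DLC) (k : ℕ) : ℝ := ∑ j ∈ Finset.Icc 1 k, π.τ j

/-- Cumulative scalar contract of the first `k` segments. -/
noncomputable def Asum (π : DLC) (k : ℕ) : ℝ := ∑ j ∈ Finset.Icc 1 k, π.α j * π.τ j

/-- Time-averaged contract `ᾱ^k` after the first `k` segments. -/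
noncomputable def avg (π : DLC) (k : ℕ) : ℝ := π.Asum k / π.Tsum k

/-- Validity: positive durations, nonnegative scalars, actions in `{1,…,n}`,
and each action is a best response to the historical average contract at the
end of its segment, and (for `k ≥ 2`) also at its beginning. -/
def Valid (n : ℕ) (c R : ℕ → ℝ) (π : DLC) : Prop :=
  1 ≤ π.K ∧
    (∀ k ∈ Finset.Icc 1 π.K, 0 ≤ π.α k ∧ 0 < π.τ k ∧ π.a k ∈ Finset.Icc 1 n) ∧
    (∀ k ∈ Finset.Icc 1 π.K, π.a k ∈ BR n c R (π.avg k)) ∧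
    (∀ k, 2 ≤ k → k ≤ π.K → π.a k ∈ BR n c R (π.avg (k - 1)))

/-- Time-averaged principal utility. -/
noncomputable def Util (R : ℕ → ℝ) (π : DLC) : ℝ :=
  (∑ k ∈ Finset.Icc 1 π.K, π.τ k * (1 - π.α k) * R (π.a k)) / π.Tsum π.K

/-- Time-averaged agent utility. -/
noncomputable def UtilA (c R : ℕ → ℝ) (π : DLC) : ℝ :=
  (∑ k ∈ Finset.Icc 1 π.K, π.τ k * (π.α k * R (π.a k) - c (π.a k))) / π.Tsum π.K

/-- Free-fall: the zero contract is offered on every segment after the first. -/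
def FreeFall (π : DLC) : Prop := ∀ k, 2 ≤ k → k ≤ π.K → π.α k = 0

/-- Cumulative principal utility `u_P^{(t)}(π)` up to time `t`. -/
noncomputable def cumUtil (R : ℕ → ℝ) (π : DLC) (t : ℝ) : ℝ :=
  ∑ k ∈ Finset.Icc 1 π.K,
    (min t (π.Tsum k) - min t (π.Tsum (k - 1))) * (1 - π.α k) * R (π.a k)

/-- Cumulative scalar contract `A^{(t)}` up to time `t`. -/
noncomputable def cumA (π : DLC) (t : ℝ) : ℝ :=
  ∑ k ∈ Finset.Icc 1 π.K, (min t (π.Tsum k) - min t (π.Tsum (k - 1))) * π.α k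

end DLC

/-!
Indifference between `i` and `i + 1` at an average contract `x` forces `x = α_{i,i+1}`.
So the average does not move during segment `k`, which means the segment itself offers
`α^k = α_{i,i+1} ≤ 1`. Switching to `i + 1` keeps every best-response condition (it is a best
response at both averages) and replaces `(1 - α^k) R_i` by the larger `(1 - α^k) R_{i+1}`.
-/

namespace LinInstance

variable {n : ℕ} {c R : ℕ → ℝ}

lemma reward_lt_succ (h : LinInstance n c R) {i : ℕ} (hi : 1 ≤ i) (hin : i < n) :
    R i < R (i + 1) :=
  h.2.2.2.2.1 i hi hin

lemma strictMonoOn_indiff (h : LinInstance n c R) :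
    StrictMonoOn (indiff c R) (Set.Icc 1 (n - 1)) :=
  strictMonoOn_of_lt_add_one Set.ordConnected_Icc fun i _ hi hi' =>
    h.2.2.2.2.2.2.1 i hi.1 hi'.2

lemma indiff_le_one (h : LinInstance n c R) {i : ℕ} (hi : 1 ≤ i) (hin : i + 1 ≤ n) :
    indiff c R i ≤ 1 := by
  have hn : 2 ≤ n := h.1
  calc indiff c R i ≤ indiff c R (n - 1) :=
        h.strictMonoOn_indiff.monotoneOn ⟨hi, by omega⟩ ⟨by omega, le_rfl⟩ (by omega)
    _ ≤ 1 := h.2.2.2.2.2.2.2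

end LinInstance

lemma eq_indiff_of_mem_BR {n : ℕ} {c R : ℕ → ℝ} {x : ℝ} {i : ℕ} (hR : R i ≠ R (i + 1))
    (hi : i ∈ BR n c R x) (hi' : i + 1 ∈ BR n c R x) : x = indiff c R i := by
  have h₁ := hi.2 (i + 1) hi'.1
  have h₂ := hi'.2 i hi.1
  rw [indiff, eq_div_iff (sub_ne_zero.mpr hR.symm)]
  linarith

namespace DLC

variable {π : DLC}

def withAction (π : DLC) (k₀ b : ℕ) : DLC :=
  ⟨π.K, π.α, π.τ, fun k => if k = k₀ then b else π.a k⟩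

lemma Tsum_succ (π : DLC) (k : ℕ) : π.Tsum (k + 1) = π.Tsum k + π.τ (k + 1) :=
  Finset.sum_Icc_succ_top (by omega) _

lemma Asum_succ (π : DLC) (k : ℕ) : π.Asum (k + 1) = π.Asum k + π.α (k + 1) * π.τ (k + 1) :=
  Finset.sum_Icc_succ_top (by omega) _

lemma Asum_eq_avg_mul_Tsum {k : ℕ} (h : π.Tsum k ≠ 0) : π.Asum k = π.avg k * π.Tsum k :=
  (div_mul_cancel₀ _ h).symm

lemma α_succ_eq_of_Asum_eq {k : ℕ} {x : ℝ} (hτ : π.τ (k + 1) ≠ 0) (hT : π.Tsum (k + 1) ≠ 0)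
    (hprev : π.Asum k = x * π.Tsum k) (hcur : π.avg (k + 1) = x) : π.α (k + 1) = x := by
  have h := Asum_eq_avg_mul_Tsum hT
  rw [hcur, Asum_succ, Tsum_succ, hprev, mul_add, add_right_inj] at h
  exact mul_right_cancel₀ hτ h

lemma Util_le_Util_withAction {R : ℕ → ℝ} (hT : 0 ≤ π.Tsum π.K) {k₀ b : ℕ}
    (hτ : 0 ≤ π.τ k₀) (hα : π.α k₀ ≤ 1) (hR : R (π.a k₀) ≤ R b) : π.Util R ≤ (π.withAction k₀ b).Util R := by
  refine div_le_div_of_nonneg_right (Finset.sum_le_sum fun k _ => ?_) hT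
  dsimp only [withAction]
  split_ifs with hk
  · subst hk
    exact mul_le_mul_of_nonneg_left hR (mul_nonneg hτ (sub_nonneg.mpr hα))
  · exact le_rfl

namespace Valid

variable {n : ℕ} {c R : ℕ → ℝ}

lemma Tsum_pos (hπ : π.Valid n c R) {k : ℕ} (hk : 1 ≤ k) (hkK : k ≤ π.K) : 0 < π.Tsum k :=
  Finset.sum_pos (fun j hj => (hπ.2.1 j (Finset.Icc_subset_Icc_right hkK hj)).2.1)
    ⟨1, Finset.mem_Icc.mpr ⟨le_rfl, hk⟩⟩

lemma α_eq_of_avg_eq (hπ : π.Valid n c R) {k : ℕ} (hk : k ∈ Finset.Icc 1 π.K) {x : ℝ}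
    (hcur : π.avg k = x) (hprev : 2 ≤ k → π.avg (k - 1) = x) : π.α k = x := by
  obtain ⟨hk1, hkK⟩ := Finset.mem_Icc.mp hk
  obtain ⟨m, rfl⟩ : ∃ m, k = m + 1 := ⟨k - 1, by omega⟩
  refine α_succ_eq_of_Asum_eq (hπ.2.1 _ hk).2.1.ne' (hπ.Tsum_pos hk1 hkK).ne' ?_ hcur
  rcases Nat.eq_zero_or_pos m with rfl | hm
  · simp [Asum, Tsum]
  · rw [Asum_eq_avg_mul_Tsum (hπ.Tsum_pos hm (by omega)).ne', ← hprev (by omega),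
      Nat.add_sub_cancel]

lemma withAction (hπ : π.Valid n c R) {k₀ b : ℕ} (hcur : b ∈ BR n c R (π.avg k₀))
    (hprev : 2 ≤ k₀ → b ∈ BR n c R (π.avg (k₀ - 1))) : (π.withAction k₀ b).Valid n c R := by
  obtain ⟨hK, hbasic, hend, hbeg⟩ := hπ
  refine ⟨hK, fun k hk => ⟨(hbasic k hk).1, (hbasic k hk).2.1, ?_⟩, fun k hk => ?_,
    fun k hk2 hkK => ?_⟩ <;> dsimp only [DLC.withAction] <;> split_ifs with h
  · exact hcur.1
  · exact (hbasic k hk).2.2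
  · exact h ▸ hcur
  · exact hend k hk
  · subst h; exact hprev hk2
  · exact hbeg k hk2 hkK

end Valid

end DLC

/-- If during segment `k₀` the agent is indifferent between
actions `i` and `i+1` and plays `a^{k₀} = i`, then replacing `a^{k₀}` by `i+1`
yields a valid dynamic linear contract with at least the same principal utility. -/
theorem indifference_prefers_higher_action (n : ℕ) (c R : ℕ → ℝ)
    (hInst : LinInstance n c R) (π : DLC) (hπ : π.Valid n c R)
    (k₀ i : ℕ) (hk₀ : k₀ ∈ Finset.Icc 1 π.K)
    (hcur : i ∈ BR n c R (π.avg k₀) ∧ i + 1 ∈ BR n c R (π.avg k₀))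
    (hprev : 2 ≤ k₀ →
      i ∈ BR n c R (π.avg (k₀ - 1)) ∧ i + 1 ∈ BR n c R (π.avg (k₀ - 1)))
    (ha : π.a k₀ = i) :
    let π' : DLC := ⟨π.K, π.α, π.τ, fun k => if k = k₀ then i + 1 else π.a k⟩
    π'.Valid n c R ∧ π'.Util R ≥ π.Util R := by
  intro π'
  have hi : 1 ≤ i := (Finset.mem_Icc.mp hcur.1.1).1
  have hin : i + 1 ≤ n := (Finset.mem_Icc.mp hcur.2.1).2
  have hR : R i < R (i + 1) := hInst.reward_lt_succ hi hin
  have hα : π.α k₀ = indiff c R i :=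
    hπ.α_eq_of_avg_eq hk₀ (eq_indiff_of_mem_BR hR.ne hcur.1 hcur.2)
      fun hk => eq_indiff_of_mem_BR hR.ne (hprev hk).1 (hprev hk).2
  refine ⟨hπ.withAction hcur.2 fun hk => (hprev hk).2, ?_⟩
  exact DLC.Util_le_Util_withAction (hπ.Tsum_pos hπ.1 le_rfl).le (hπ.2.1 k₀ hk₀).2.1.le
    (hα ▸ hInst.indiff_le_one hi hin) (ha ▸ hR.le)
end

section
/- For every valid p-scaled dynamic contract π there exists a valid p-scaled dynamic contract π′ = ((α′^k, τ′^k, a′^k))_{k=1}^{K′} with Util(π′) ≥ Util(π) such that a′^k ≠ a′^{k+1} for all 1 ≤ k ≤ K′−1 and a′^k ≠ a′^{k+2} for all 1 ≤ k ≤ K′−2. -/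
open Finset

/-- Expected reward `R_i = Σ_j F_{ij} r_j` of action `i`. -/
noncomputable def expRew (m : ℕ) (F : ℕ → ℕ → ℝ) (r : ℕ → ℝ) (i : ℕ) : ℝ :=
  ∑ j ∈ Finset.Icc 1 m, F i j * r j

/-- Expected payment `P_i = Σ_j F_{ij} p_j` of action `i` under base contract `p`. -/
noncomputable def expPay (m : ℕ) (F : ℕ → ℕ → ℝ) (p : ℕ → ℝ) (i : ℕ) : ℝ :=
  ∑ j ∈ Finset.Icc 1 m, F i j * p j

/-- Basic assumptions of a principal-agent instance with base contract `p`. -/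
def PInstance (n m : ℕ) (c : ℕ → ℝ) (F : ℕ → ℕ → ℝ) (r : ℕ → ℝ) (p : ℕ → ℝ) : Prop :=
  2 ≤ n ∧ (∀ i ∈ Finset.Icc 1 n, 0 ≤ c i) ∧ (∀ j ∈ Finset.Icc 1 m, 0 ≤ r j) ∧
    (∀ i ∈ Finset.Icc 1 n,
      (∀ j ∈ Finset.Icc 1 m, 0 ≤ F i j) ∧ ∑ j ∈ Finset.Icc 1 m, F i j = 1) ∧
    (∀ j ∈ Finset.Icc 1 m, 0 ≤ p j)

/-- Best-response set `BR_p(x)` of the agent to the scaled contract `x·p`. -/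
def BRp (n m : ℕ) (c : ℕ → ℝ) (F : ℕ → ℕ → ℝ) (p : ℕ → ℝ) (x : ℝ) : Set ℕ :=
  {i | i ∈ Finset.Icc 1 n ∧ ∀ j ∈ Finset.Icc 1 n,
    x * expPay m F p j - c j ≤ x * expPay m F p i - c i}

/-- `β` records the breakpoints of `p`-scaled contracts: `β 0 = α_{0,1} = 0`,
`β i = α_{i,i+1}` (for `1 ≤ i ≤ n-1`), they are strictly increasing, and for
`α ≥ 0` action `i` is a best response iff `α_{i-1,i} ≤ α ≤ α_{i,i+1}`
(with `α_{n,n+1} = +∞`). -/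
def Breakpoints (n m : ℕ) (c : ℕ → ℝ) (F : ℕ → ℕ → ℝ) (p : ℕ → ℝ) (β : ℕ → ℝ) : Prop :=
  β 0 = 0 ∧ (∀ i, i + 1 ≤ n - 1 → β i < β (i + 1)) ∧ (0 < β 1) ∧
    (∀ x : ℝ, 0 ≤ x → ∀ i, 1 ≤ i → i ≤ n →
      (i ∈ BRp n m c F p x ↔ (β (i - 1) ≤ x ∧ (i < n → x ≤ β i))))

/-- A `p`-scaled dynamic contract with `K` segments (indexed `1,…,K`):
scalars `α`, durations `τ`, and actions `a`. -/
structure DSC where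
  K : ℕ
  α : ℕ → ℝ
  τ : ℕ → ℝ
  a : ℕ → ℕ

namespace DSC

/-- Total duration of the first `k` segments. -/
noncomputable def Tsum (π : DSC) (k : ℕ) : ℝ := ∑ j ∈ Finset.Icc 1 k, π.τ j

/-- Time-averaged scalar `ᾱ^k` after the first `k` segments. -/
noncomputable def avg (π : DSC) (k : ℕ) : ℝ :=
  (∑ j ∈ Finset.Icc 1 k, π.α j * π.τ j) / π.Tsum k

/-- Validity of a `p`-scaled dynamic contract. -/
def Valid (n m : ℕ) (c : ℕ → ℝ) (F : ℕ → ℕ → ℝ) (p : ℕ → ℝ) (π : DSC) : Prop :=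
  1 ≤ π.K ∧
    (∀ k ∈ Finset.Icc 1 π.K, 0 ≤ π.α k ∧ 0 < π.τ k ∧ π.a k ∈ Finset.Icc 1 n) ∧
    (∀ k ∈ Finset.Icc 1 π.K, π.a k ∈ BRp n m c F p (π.avg k)) ∧
    (∀ k, 2 ≤ k → k ≤ π.K → π.a k ∈ BRp n m c F p (π.avg (k - 1)))

/-- Time-averaged principal utility. -/
noncomputable def Util (m : ℕ) (F : ℕ → ℕ → ℝ) (r : ℕ → ℝ) (p : ℕ → ℝ) (π : DSC) : ℝ :=
  (∑ k ∈ Finset.Icc 1 π.K,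
    π.τ k * (expRew m F r (π.a k) - π.α k * expPay m F p (π.a k))) / π.Tsum π.K

/-- Free-fall: the zero contract is offered on every segment after the first. -/
def FreeFall (π : DSC) : Prop := ∀ k, 2 ≤ k → k ≤ π.K → π.α k = 0

end DSC

/-!
Shorten the contract step by step without lowering utility, and induct on the number of
segments. Each step replaces a prefix `1, …, q` by a shorter valid contract with the same
total duration and the same cumulative scalar `Σ α τ`; the later segments then see the same
averages `ᾱ`, so they stay valid, and the utility does not drop as long as the new prefix
earns at least as much.

Two adjacent segments with the same action merge into one offering their duration-weighted
mean scalar. If `a_k = a_{k+2} ≠ a_{k+1}`, then `a_k` and `a_{k+1}` are both best responses at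
`ᾱ^k` and at `ᾱ^{k+1}`; two distinct actions are both best responses only at a breakpoint, so
`ᾱ^k = ᾱ^{k+1} = α^{k+1}`. The prefix `1, …, k+1` earns a convex combination of what the
first `k` segments earn when stretched to the full duration and of what a single segment at
`ᾱ^{k+1}` with action `a_{k+1}` earns, so one of these two replacements does not lose.
-/

section Breakpoints

variable {n m : ℕ} {c : ℕ → ℝ} {F : ℕ → ℕ → ℝ} {p β : ℕ → ℝ}

theorem Breakpoints.eq_of_mem_BRp_of_lt (hβ : Breakpoints n m c F p β) {x : ℝ} (hx : 0 ≤ x)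
    {i j : ℕ} (hij : i < j) (hi : i ∈ BRp n m c F p x) (hj : j ∈ BRp n m c F p x) :
    x = β i := by
  obtain ⟨-, hβ_lt, -, hchar⟩ := hβ
  obtain ⟨hi1, -⟩ := mem_Icc.1 hi.1
  obtain ⟨-, hjn⟩ := mem_Icc.1 hj.1
  have hle : β i ≤ β (j - 1) :=
    monotoneOn_of_le_add_one Set.ordConnected_Iic (fun a _ _ ha => (hβ_lt a ha).le)
      (Set.mem_Iic.2 (by omega)) (Set.mem_Iic.2 (by omega)) (by omega)
  have hxi := ((hchar x hx i hi1 (by omega)).1 hi).2 (by omega)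
  have hxj := ((hchar x hx j (by omega) hjn).1 hj).1
  linarith

theorem Breakpoints.eq_of_mem_BRp_of_ne (hβ : Breakpoints n m c F p β) {x y : ℝ} (hx : 0 ≤ x)
    (hy : 0 ≤ y) {i j : ℕ} (hij : i ≠ j) (hix : i ∈ BRp n m c F p x)
    (hjx : j ∈ BRp n m c F p x) (hiy : i ∈ BRp n m c F p y) (hjy : j ∈ BRp n m c F p y) :
    x = y := by
  wlog h : i < j generalizing i j
  · exact this hij.symm hjx hix hjy hiy (by omega)
  rw [hβ.eq_of_mem_BRp_of_lt hx h hix hjx, hβ.eq_of_mem_BRp_of_lt hy h hiy hjy]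

end Breakpoints

namespace DSC

variable {n m : ℕ} {c : ℕ → ℝ} {F : ℕ → ℕ → ℝ} {p : ℕ → ℝ}

def segSum (f : ℝ → ℝ → ℕ → ℝ) (π : DSC) (k : ℕ) : ℝ :=
  ∑ j ∈ Icc 1 k, f (π.α j) (π.τ j) (π.a j)

def Asum (π : DSC) (k : ℕ) : ℝ := π.segSum (fun x t _ => x * t) k

noncomputable def Usum (m : ℕ) (F : ℕ → ℕ → ℝ) (r p : ℕ → ℝ) (π : DSC) (k : ℕ) : ℝ :=
  π.segSum (fun x t i => t * (expRew m F r i - x * expPay m F p i)) k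

theorem Tsum_eq_segSum (π : DSC) (k : ℕ) : π.Tsum k = π.segSum (fun _ t _ => t) k := rfl

theorem avg_eq_Asum_div_Tsum (π : DSC) (k : ℕ) : π.avg k = π.Asum k / π.Tsum k := rfl

theorem Util_eq_Usum_div_Tsum (m : ℕ) (F : ℕ → ℕ → ℝ) (r p : ℕ → ℝ) (π : DSC) :
    π.Util m F r p = π.Usum m F r p π.K / π.Tsum π.K := rfl

theorem segSum_succ (f : ℝ → ℝ → ℕ → ℝ) (π : DSC) (k : ℕ) :
    π.segSum f (k + 1) = π.segSum f k + f (π.α (k + 1)) (π.τ (k + 1)) (π.a (k + 1)) :=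
  sum_Icc_succ_top (by omega) _

theorem Tsum_succ (π : DSC) (k : ℕ) : π.Tsum (k + 1) = π.Tsum k + π.τ (k + 1) :=
  segSum_succ (fun _ t _ => t) π k

theorem Asum_succ (π : DSC) (k : ℕ) :
    π.Asum (k + 1) = π.Asum k + π.α (k + 1) * π.τ (k + 1) :=
  segSum_succ (fun x t _ => x * t) π k

theorem Usum_succ (m : ℕ) (F : ℕ → ℕ → ℝ) (r p : ℕ → ℝ) (π : DSC) (k : ℕ) :
    π.Usum m F r p (k + 1) = π.Usum m F r p k +
      π.τ (k + 1) * (expRew m F r (π.a (k + 1)) - π.α (k + 1) * expPay m F p (π.a (k + 1))) :=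
  segSum_succ _ π k

theorem segSum_congr {f : ℝ → ℝ → ℕ → ℝ} {π ρ : DSC} {k : ℕ}
    (h : ∀ j, 1 ≤ j → j ≤ k → f (π.α j) (π.τ j) (π.a j) = f (ρ.α j) (ρ.τ j) (ρ.a j)) :
    π.segSum f k = ρ.segSum f k :=
  sum_congr rfl fun j hj => h j (mem_Icc.1 hj).1 (mem_Icc.1 hj).2

section Valid

variable {π : DSC}

theorem Valid.alpha_nonneg (hπ : π.Valid n m c F p) {k : ℕ} (h1 : 1 ≤ k) (hk : k ≤ π.K) :
    0 ≤ π.α k :=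
  (hπ.2.1 k (mem_Icc.2 ⟨h1, hk⟩)).1

theorem Valid.tau_pos (hπ : π.Valid n m c F p) {k : ℕ} (h1 : 1 ≤ k) (hk : k ≤ π.K) :
    0 < π.τ k :=
  (hπ.2.1 k (mem_Icc.2 ⟨h1, hk⟩)).2.1

theorem Valid.mem_BRp_avg (hπ : π.Valid n m c F p) {k : ℕ} (h1 : 1 ≤ k) (hk : k ≤ π.K) :
    π.a k ∈ BRp n m c F p (π.avg k) :=
  hπ.2.2.1 k (mem_Icc.2 ⟨h1, hk⟩)

theorem Valid.mem_BRp_avg_prev (hπ : π.Valid n m c F p) {k : ℕ} (h1 : 1 ≤ k)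
    (hk : k + 1 ≤ π.K) : π.a (k + 1) ∈ BRp n m c F p (π.avg k) := by
  simpa using hπ.2.2.2 (k + 1) (by omega) hk

theorem Valid.Tsum_nonneg (hπ : π.Valid n m c F p) {k : ℕ} (hk : k ≤ π.K) :
    0 ≤ π.Tsum k :=
  sum_nonneg fun _ hj => (hπ.tau_pos (mem_Icc.1 hj).1 ((mem_Icc.1 hj).2.trans hk)).le

theorem Valid.Tsum_pos (hπ : π.Valid n m c F p) {k : ℕ} (h1 : 1 ≤ k) (hk : k ≤ π.K) :
    0 < π.Tsum k :=
  sum_pos (fun _ hj => hπ.tau_pos (mem_Icc.1 hj).1 ((mem_Icc.1 hj).2.trans hk))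
    (nonempty_Icc.2 h1)

theorem Valid.avg_nonneg (hπ : π.Valid n m c F p) {k : ℕ} (hk : k ≤ π.K) : 0 ≤ π.avg k := by
  refine div_nonneg (sum_nonneg fun j hj => ?_) (hπ.Tsum_nonneg hk)
  obtain ⟨h1, hj⟩ := mem_Icc.1 hj
  exact mul_nonneg (hπ.alpha_nonneg h1 (hj.trans hk)) (hπ.tau_pos h1 (hj.trans hk)).le

end Valid

def replacePrefix (π ρ : DSC) (q : ℕ) : DSC where
  K := ρ.K + (π.K - q)
  α l := if l ≤ ρ.K then ρ.α l else π.α (l - ρ.K + q)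
  τ l := if l ≤ ρ.K then ρ.τ l else π.τ (l - ρ.K + q)
  a l := if l ≤ ρ.K then ρ.a l else π.a (l - ρ.K + q)

section ReplacePrefix

variable {π ρ : DSC} {q : ℕ}

theorem replacePrefix_of_le {l : ℕ} (hl : l ≤ ρ.K) :
    (π.replacePrefix ρ q).α l = ρ.α l ∧ (π.replacePrefix ρ q).τ l = ρ.τ l ∧
      (π.replacePrefix ρ q).a l = ρ.a l := by
  simp [replacePrefix, hl]

theorem replacePrefix_add_succ (d : ℕ) :
    (π.replacePrefix ρ q).α (ρ.K + d + 1) = π.α (q + d + 1) ∧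
      (π.replacePrefix ρ q).τ (ρ.K + d + 1) = π.τ (q + d + 1) ∧
      (π.replacePrefix ρ q).a (ρ.K + d + 1) = π.a (q + d + 1) := by
  have e : ρ.K + d + 1 - ρ.K + q = q + d + 1 := by omega
  simp [replacePrefix, e]

theorem segSum_replacePrefix_of_le (f : ℝ → ℝ → ℕ → ℝ) {l : ℕ} (hl : l ≤ ρ.K) :
    (π.replacePrefix ρ q).segSum f l = ρ.segSum f l :=
  segSum_congr fun _ _ hj => by
    obtain ⟨hα, hτ, ha⟩ := replacePrefix_of_le (π := π) (q := q) (hj.trans hl)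
    rw [hα, hτ, ha]

theorem segSum_replacePrefix_add (f : ℝ → ℝ → ℕ → ℝ) (d : ℕ) :
    (π.replacePrefix ρ q).segSum f (ρ.K + d) + π.segSum f q =
      ρ.segSum f ρ.K + π.segSum f (q + d) := by
  induction d with
  | zero => simp [segSum_replacePrefix_of_le f le_rfl]
  | succ d ih =>
    obtain ⟨hα, hτ, ha⟩ := replacePrefix_add_succ (π := π) (ρ := ρ) (q := q) d
    rw [← Nat.add_assoc, segSum_succ, ← Nat.add_assoc, segSum_succ, hα, hτ, ha]
    linarith

theorem avg_replacePrefix_of_le {l : ℕ} (hl : l ≤ ρ.K) :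
    (π.replacePrefix ρ q).avg l = ρ.avg l := by
  simp only [avg_eq_Asum_div_Tsum, Asum, Tsum_eq_segSum, segSum_replacePrefix_of_le _ hl]

theorem Tsum_replacePrefix_add (hT : ρ.Tsum ρ.K = π.Tsum q) (d : ℕ) :
    (π.replacePrefix ρ q).Tsum (ρ.K + d) = π.Tsum (q + d) := by
  have h : (π.replacePrefix ρ q).Tsum (ρ.K + d) + π.Tsum q = ρ.Tsum ρ.K + π.Tsum (q + d) :=
    segSum_replacePrefix_add (fun _ t _ => t) d
  linarith

theorem avg_replacePrefix_add (hT : ρ.Tsum ρ.K = π.Tsum q) (hA : ρ.Asum ρ.K = π.Asum q)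
    (d : ℕ) : (π.replacePrefix ρ q).avg (ρ.K + d) = π.avg (q + d) := by
  have h : (π.replacePrefix ρ q).Asum (ρ.K + d) + π.Asum q = ρ.Asum ρ.K + π.Asum (q + d) :=
    segSum_replacePrefix_add (fun x t _ => x * t) d
  rw [avg_eq_Asum_div_Tsum, avg_eq_Asum_div_Tsum, Tsum_replacePrefix_add hT]
  congr 1
  linarith

theorem Valid.replacePrefix (hπ : π.Valid n m c F p) (hρ : ρ.Valid n m c F p) (hq : 1 ≤ q)
    (hT : ρ.Tsum ρ.K = π.Tsum q) (hA : ρ.Asum ρ.K = π.Asum q) :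
    (π.replacePrefix ρ q).Valid n m c F p := by
  refine ⟨le_add_right hρ.1, fun l hl => ?_, fun l hl => ?_,
    fun l hl2 (hl : l ≤ ρ.K + (π.K - q)) => ?_⟩
  · replace hl : 1 ≤ l ∧ l ≤ ρ.K + (π.K - q) := mem_Icc.1 hl
    rcases le_or_gt l ρ.K with h | h
    · obtain ⟨hα, hτ, ha⟩ := replacePrefix_of_le (π := π) (q := q) h
      rw [hα, hτ, ha]
      exact hρ.2.1 l (mem_Icc.2 ⟨hl.1, h⟩)
    · obtain ⟨d, rfl⟩ := Nat.exists_eq_add_of_lt h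
      obtain ⟨hα, hτ, ha⟩ := replacePrefix_add_succ (π := π) (ρ := ρ) (q := q) d
      rw [hα, hτ, ha]
      exact hπ.2.1 _ (mem_Icc.2 ⟨by omega, by omega⟩)
  · replace hl : 1 ≤ l ∧ l ≤ ρ.K + (π.K - q) := mem_Icc.1 hl
    rcases le_or_gt l ρ.K with h | h
    · rw [(replacePrefix_of_le h).2.2, avg_replacePrefix_of_le h]
      exact hρ.mem_BRp_avg hl.1 h
    · obtain ⟨d, rfl⟩ := Nat.exists_eq_add_of_lt h
      have havg : (π.replacePrefix ρ q).avg (ρ.K + d + 1) = π.avg (q + d + 1) :=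
        avg_replacePrefix_add hT hA (d + 1)
      rw [(replacePrefix_add_succ d).2.2, havg]
      exact hπ.mem_BRp_avg (by omega) (by omega)
  · rcases le_or_gt l ρ.K with h | h
    · rw [(replacePrefix_of_le h).2.2, avg_replacePrefix_of_le (by omega)]
      exact hρ.2.2.2 l hl2 h
    · obtain ⟨d, rfl⟩ := Nat.exists_eq_add_of_lt h
      rw [(replacePrefix_add_succ d).2.2, Nat.add_sub_cancel, avg_replacePrefix_add hT hA d]
      exact hπ.mem_BRp_avg_prev (by omega) (by omega)

theorem Util_le_Util_replacePrefix (r : ℕ → ℝ) (hπ : π.Valid n m c F p) (hq : q ≤ π.K)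
    (hT : ρ.Tsum ρ.K = π.Tsum q) (hU : π.Usum m F r p q ≤ ρ.Usum m F r p ρ.K) :
    π.Util m F r p ≤ (π.replacePrefix ρ q).Util m F r p := by
  have hK : (π.replacePrefix ρ q).K = ρ.K + (π.K - q) := rfl
  have hU' : (π.replacePrefix ρ q).Usum m F r p (ρ.K + (π.K - q)) + π.Usum m F r p q =
      ρ.Usum m F r p ρ.K + π.Usum m F r p (q + (π.K - q)) := segSum_replacePrefix_add _ _
  rw [Nat.add_sub_cancel' hq] at hU'
  rw [Util_eq_Usum_div_Tsum, Util_eq_Usum_div_Tsum, hK, Tsum_replacePrefix_add hT,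
    Nat.add_sub_cancel' hq]
  exact div_le_div_of_nonneg_right (by linarith) (hπ.Tsum_nonneg le_rfl)

theorem exists_shorter_of_replacePrefix (r : ℕ → ℝ) (hπ : π.Valid n m c F p)
    (hρ : ρ.Valid n m c F p) (hq1 : 1 ≤ q) (hq : q ≤ π.K) (hρq : ρ.K < q)
    (hT : ρ.Tsum ρ.K = π.Tsum q) (hA : ρ.Asum ρ.K = π.Asum q)
    (hU : π.Usum m F r p q ≤ ρ.Usum m F r p ρ.K) :
    ∃ σ : DSC, σ.Valid n m c F p ∧ σ.K < π.K ∧ π.Util m F r p ≤ σ.Util m F r p :=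
  ⟨π.replacePrefix ρ q, hπ.replacePrefix hρ hq1 hT hA,
    by change ρ.K + (π.K - q) < π.K; omega, Util_le_Util_replacePrefix r hπ hq hT hU⟩

end ReplacePrefix

def single (x t : ℝ) (b : ℕ) : DSC := ⟨1, fun _ => x, fun _ => t, fun _ => b⟩

theorem single_K (x t : ℝ) (b : ℕ) : (single x t b).K = 1 := rfl

theorem segSum_single (f : ℝ → ℝ → ℕ → ℝ) (x t : ℝ) (b : ℕ) :
    (single x t b).segSum f 1 = f x t b := by
  simp [segSum, single]

theorem Tsum_single (x t : ℝ) (b : ℕ) : (single x t b).Tsum 1 = t :=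
  segSum_single (fun _ t _ => t) x t b

theorem Asum_single (x t : ℝ) (b : ℕ) : (single x t b).Asum 1 = x * t :=
  segSum_single (fun x t _ => x * t) x t b

theorem Usum_single (m : ℕ) (F : ℕ → ℕ → ℝ) (r p : ℕ → ℝ) (x t : ℝ) (b : ℕ) :
    (single x t b).Usum m F r p 1 = t * (expRew m F r b - x * expPay m F p b) :=
  segSum_single _ x t b

theorem avg_single {x t : ℝ} (b : ℕ) (ht : t ≠ 0) : (single x t b).avg 1 = x := by
  rw [avg_eq_Asum_div_Tsum, Asum_single, Tsum_single, mul_div_cancel_right₀ _ ht]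

theorem valid_single {x t : ℝ} {b : ℕ} (hx : 0 ≤ x) (ht : 0 < t)
    (hb : b ∈ BRp n m c F p x) : (single x t b).Valid n m c F p := by
  refine ⟨le_rfl, fun _ _ => ⟨hx, ht, hb.1⟩, fun l hl => ?_,
    fun l hl2 (hl : l ≤ 1) => absurd hl2 (by omega)⟩
  obtain rfl : l = 1 := by simpa [single] using hl
  rwa [avg_single b ht.ne']

def scalePrefix (π : DSC) (k : ℕ) (s : ℝ) : DSC := ⟨k, π.α, fun l => s * π.τ l, π.a⟩

theorem scalePrefix_K (π : DSC) (k : ℕ) (s : ℝ) : (π.scalePrefix k s).K = k := rfl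

theorem segSum_scalePrefix {f : ℝ → ℝ → ℕ → ℝ} (π : DSC) (k : ℕ) {s : ℝ}
    (hf : ∀ x t i, f x (s * t) i = s * f x t i) (l : ℕ) :
    (π.scalePrefix k s).segSum f l = s * π.segSum f l := by
  simp only [segSum, scalePrefix, hf, mul_sum]

theorem Tsum_scalePrefix (π : DSC) (k : ℕ) (s : ℝ) (l : ℕ) :
    (π.scalePrefix k s).Tsum l = s * π.Tsum l :=
  segSum_scalePrefix (f := fun _ t _ => t) π k (fun _ _ _ => rfl) l

theorem Asum_scalePrefix (π : DSC) (k : ℕ) (s : ℝ) (l : ℕ) :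
    (π.scalePrefix k s).Asum l = s * π.Asum l :=
  segSum_scalePrefix π k (fun _ _ _ => mul_left_comm _ _ _) l

theorem Usum_scalePrefix (m : ℕ) (F : ℕ → ℕ → ℝ) (r p : ℕ → ℝ) (π : DSC) (k : ℕ) (s : ℝ)
    (l : ℕ) : (π.scalePrefix k s).Usum m F r p l = s * π.Usum m F r p l :=
  segSum_scalePrefix π k (fun _ _ _ => mul_assoc _ _ _) l

theorem avg_scalePrefix (π : DSC) (k : ℕ) {s : ℝ} (hs : s ≠ 0) (l : ℕ) :
    (π.scalePrefix k s).avg l = π.avg l := by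
  rw [avg_eq_Asum_div_Tsum, Asum_scalePrefix, Tsum_scalePrefix, mul_div_mul_left _ _ hs,
    avg_eq_Asum_div_Tsum]

theorem Valid.scalePrefix {π : DSC} (hπ : π.Valid n m c F p) {k : ℕ} (hk1 : 1 ≤ k)
    (hk : k ≤ π.K) {s : ℝ} (hs : 0 < s) : (π.scalePrefix k s).Valid n m c F p := by
  refine ⟨hk1, fun l hl => ?_, fun l hl => ?_, fun l hl2 hl => ?_⟩
  · obtain ⟨h1, hl⟩ := mem_Icc.1 hl
    exact ⟨hπ.alpha_nonneg h1 (hl.trans hk), mul_pos hs (hπ.tau_pos h1 (hl.trans hk)),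
      (hπ.2.1 l (mem_Icc.2 ⟨h1, hl.trans hk⟩)).2.2⟩
  · obtain ⟨h1, hl⟩ := mem_Icc.1 hl
    rw [avg_scalePrefix _ _ hs.ne']
    exact hπ.mem_BRp_avg h1 (hl.trans hk)
  · rw [avg_scalePrefix _ _ hs.ne']
    exact hπ.2.2.2 l hl2 (hl.trans hk)

noncomputable def mergeNext (π : DSC) (k : ℕ) : DSC where
  K := k
  α l := if l = k then (π.α k * π.τ k + π.α (k + 1) * π.τ (k + 1)) / (π.τ k + π.τ (k + 1))
    else π.α l
  τ l := if l = k then π.τ k + π.τ (k + 1) else π.τ l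
  a := π.a

section MergeNext

variable {π : DSC} {k : ℕ}

theorem segSum_mergeNext_of_lt (f : ℝ → ℝ → ℕ → ℝ) {l : ℕ} (hl : l < k) :
    (π.mergeNext k).segSum f l = π.segSum f l :=
  segSum_congr fun _ _ hj => by simp [mergeNext, (hj.trans_lt hl).ne]

theorem segSum_mergeNext {f : ℝ → ℝ → ℕ → ℝ} (hk : 1 ≤ k)
    (hf : f ((π.mergeNext k).α k) (π.τ k + π.τ (k + 1)) (π.a k) =
      f (π.α k) (π.τ k) (π.a k) + f (π.α (k + 1)) (π.τ (k + 1)) (π.a (k + 1))) :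
    (π.mergeNext k).segSum f k = π.segSum f (k + 1) := by
  obtain ⟨j, rfl⟩ := Nat.exists_eq_add_of_le' hk
  rw [segSum_succ, segSum_succ, segSum_succ, segSum_mergeNext_of_lt _ (Nat.lt_succ_self j),
    add_assoc, ← hf]
  simp [mergeNext]

theorem mergeNext_α_mul (hτ : π.τ k + π.τ (k + 1) ≠ 0) :
    (π.mergeNext k).α k * (π.τ k + π.τ (k + 1)) =
      π.α k * π.τ k + π.α (k + 1) * π.τ (k + 1) := by
  simp [mergeNext, div_mul_cancel₀ _ hτ]

theorem Tsum_mergeNext (hk : 1 ≤ k) : (π.mergeNext k).Tsum k = π.Tsum (k + 1) :=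
  segSum_mergeNext (f := fun _ t _ => t) hk rfl

theorem Asum_mergeNext (hk : 1 ≤ k) (hτ : π.τ k + π.τ (k + 1) ≠ 0) :
    (π.mergeNext k).Asum k = π.Asum (k + 1) :=
  segSum_mergeNext (f := fun x t _ => x * t) hk (mergeNext_α_mul hτ)

theorem Usum_mergeNext (r : ℕ → ℝ) (hk : 1 ≤ k) (hτ : π.τ k + π.τ (k + 1) ≠ 0)
    (ha : π.a (k + 1) = π.a k) :
    (π.mergeNext k).Usum m F r p k = π.Usum m F r p (k + 1) := by
  refine segSum_mergeNext hk ?_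
  rw [ha]
  linear_combination (-expPay m F p (π.a k)) * mergeNext_α_mul hτ

theorem avg_mergeNext_of_lt {l : ℕ} (hl : l < k) : (π.mergeNext k).avg l = π.avg l := by
  simp only [avg_eq_Asum_div_Tsum, Asum, Tsum_eq_segSum, segSum_mergeNext_of_lt _ hl]

theorem avg_mergeNext (hk : 1 ≤ k) (hτ : π.τ k + π.τ (k + 1) ≠ 0) :
    (π.mergeNext k).avg k = π.avg (k + 1) := by
  rw [avg_eq_Asum_div_Tsum, Tsum_mergeNext hk, Asum_mergeNext hk hτ, avg_eq_Asum_div_Tsum]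

theorem Valid.mergeNext (hπ : π.Valid n m c F p) (hk1 : 1 ≤ k) (hk : k + 1 ≤ π.K)
    (ha : π.a (k + 1) = π.a k) : (π.mergeNext k).Valid n m c F p := by
  have hαk := hπ.alpha_nonneg hk1 (by omega)
  have hαk1 := hπ.alpha_nonneg (by omega) hk
  have hτk := hπ.tau_pos hk1 (by omega)
  have hτk1 := hπ.tau_pos (by omega) hk
  refine ⟨hk1, fun l (hl : l ∈ Icc 1 k) => ?_, fun l (hl : l ∈ Icc 1 k) => ?_,
    fun l hl2 (hl : l ≤ k) => ?_⟩
  · obtain ⟨h1, hl⟩ := mem_Icc.1 hl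
    rcases hl.lt_or_eq with hl | hl
    · simpa [DSC.mergeNext, hl.ne] using hπ.2.1 l (mem_Icc.2 ⟨h1, by omega⟩)
    · subst l
      refine ⟨?_, ?_, (hπ.2.1 k (mem_Icc.2 ⟨hk1, by omega⟩)).2.2⟩ <;>
        simp only [DSC.mergeNext, if_true] <;> positivity
  · obtain ⟨h1, hl⟩ := mem_Icc.1 hl
    rcases hl.lt_or_eq with hl | hl
    · rw [avg_mergeNext_of_lt hl]
      exact hπ.mem_BRp_avg h1 (by omega)
    · subst l
      rw [avg_mergeNext hk1 (by positivity), show (π.mergeNext k).a k = π.a (k + 1) from ha.symm]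
      exact hπ.mem_BRp_avg (by omega) hk
  · rw [avg_mergeNext_of_lt (by omega)]
    exact hπ.2.2.2 l hl2 (by omega)

end MergeNext

section Shortening

variable {π : DSC} {k : ℕ}

theorem avg_eq_avg_succ_of_return {β : ℕ → ℝ} (hβ : Breakpoints n m c F p β)
    (hπ : π.Valid n m c F p) (hk1 : 1 ≤ k) (hk : k + 2 ≤ π.K) (hne : π.a k ≠ π.a (k + 1))
    (hret : π.a (k + 2) = π.a k) : π.avg k = π.avg (k + 1) :=
  hβ.eq_of_mem_BRp_of_ne (hπ.avg_nonneg (by omega)) (hπ.avg_nonneg (by omega)) hne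
    (hπ.mem_BRp_avg hk1 (by omega)) (hπ.mem_BRp_avg_prev hk1 (by omega))
    (hret ▸ hπ.mem_BRp_avg_prev (by omega) hk) (hπ.mem_BRp_avg (by omega) (by omega))

theorem exists_shorter_of_adjacent_eq (r : ℕ → ℝ) (hπ : π.Valid n m c F p) (hk1 : 1 ≤ k)
    (hk : k + 1 ≤ π.K) (ha : π.a (k + 1) = π.a k) :
    ∃ σ : DSC, σ.Valid n m c F p ∧ σ.K < π.K ∧ π.Util m F r p ≤ σ.Util m F r p := by
  have hτ : π.τ k + π.τ (k + 1) ≠ 0 :=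
    (add_pos (hπ.tau_pos hk1 (by omega)) (hπ.tau_pos (by omega) hk)).ne'
  exact exists_shorter_of_replacePrefix r hπ (hπ.mergeNext hk1 hk ha) (by omega) hk
    (Nat.lt_succ_self k) (Tsum_mergeNext hk1) (Asum_mergeNext hk1 hτ)
    (Usum_mergeNext r hk1 hτ ha).ge

theorem exists_shorter_of_avg_eq_avg_succ (r : ℕ → ℝ) (hπ : π.Valid n m c F p) (hk1 : 1 ≤ k)
    (hk : k + 1 ≤ π.K) (havg : π.avg k = π.avg (k + 1)) :
    ∃ σ : DSC, σ.Valid n m c F p ∧ σ.K < π.K ∧ π.Util m F r p ≤ σ.Util m F r p := by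
  set x := π.avg (k + 1)
  set v := expRew m F r (π.a (k + 1)) - x * expPay m F p (π.a (k + 1))
  have hTk := hπ.Tsum_pos hk1 (by omega)
  have hTk1 := hπ.Tsum_pos (by omega) hk
  have hτ := hπ.tau_pos (by omega) hk
  have hT := π.Tsum_succ k
  have hAk : π.Asum k = x * π.Tsum k := by rw [← havg]; exact (div_mul_cancel₀ _ hTk.ne').symm
  have hAk1 : π.Asum (k + 1) = x * π.Tsum (k + 1) := (div_mul_cancel₀ _ hTk1.ne').symm
  have hα : π.α (k + 1) = x :=
    mul_right_cancel₀ hτ.ne' (by linear_combination hAk1 - hAk - π.Asum_succ k + x * hT)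
  have hU : π.Usum m F r p (k + 1) = π.Usum m F r p k + π.τ (k + 1) * v := by
    rw [Usum_succ, hα]
  -- `Usum (k + 1)` is a convex combination of `Tsum (k + 1) / Tsum k * Usum k` and
  -- `Tsum (k + 1) * v`, the earnings of the two candidate prefixes
  by_cases hv : π.Tsum k * v ≤ π.Usum m F r p k
  · set s := π.Tsum (k + 1) / π.Tsum k
    have hsT : s * π.Tsum k = π.Tsum (k + 1) := div_mul_cancel₀ _ hTk.ne'
    refine exists_shorter_of_replacePrefix r hπ (hπ.scalePrefix hk1 (by omega)
      (div_pos hTk1 hTk)) (by omega) hk (Nat.lt_succ_self k) ?_ ?_ ?_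
    · rw [scalePrefix_K, Tsum_scalePrefix, hsT]
    · rw [scalePrefix_K, Asum_scalePrefix, hAk1, hAk, mul_left_comm, hsT]
    · rw [scalePrefix_K, Usum_scalePrefix, hU, ← sub_nonneg]
      have hgain : s * π.Usum m F r p k - (π.Usum m F r p k + π.τ (k + 1) * v) =
          π.τ (k + 1) / π.Tsum k * (π.Usum m F r p k - π.Tsum k * v) := by
        simp only [s, hT]; field_simp; ring
      rw [hgain]
      exact mul_nonneg (div_pos hτ hTk).le (sub_nonneg.2 hv)
  · refine exists_shorter_of_replacePrefix r hπ
      (valid_single (hπ.avg_nonneg hk) hTk1 (hπ.mem_BRp_avg (by omega) hk)) (by omega) hk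
      (by rw [single_K]; omega) (Tsum_single _ _ _) ((Asum_single _ _ _).trans hAk1.symm) ?_
    rw [single_K, Usum_single, hU, hT]
    linarith [add_mul (π.Tsum k) (π.τ (k + 1)) v]

theorem exists_shorter_of_repeat (r : ℕ → ℝ) {β : ℕ → ℝ} (hβ : Breakpoints n m c F p β)
    (hπ : π.Valid n m c F p) (hrep : ∃ k, 1 ≤ k ∧ ((k < π.K ∧ π.a k = π.a (k + 1)) ∨
      (k + 2 ≤ π.K ∧ π.a k = π.a (k + 2)))) :
    ∃ σ : DSC, σ.Valid n m c F p ∧ σ.K < π.K ∧ π.Util m F r p ≤ σ.Util m F r p := by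
  obtain ⟨k, hk1, ⟨hk, ha⟩ | ⟨hk, hret⟩⟩ := hrep
  · exact exists_shorter_of_adjacent_eq r hπ hk1 hk ha.symm
  by_cases ha : π.a k = π.a (k + 1)
  · exact exists_shorter_of_adjacent_eq r hπ hk1 (by omega) ha.symm
  · exact exists_shorter_of_avg_eq_avg_succ r hπ hk1 (by omega)
      (avg_eq_avg_succ_of_return hβ hπ hk1 hk ha hret.symm)

end Shortening

end DSC

theorem no_return_rewriting_general (n m : ℕ) (c : ℕ → ℝ) (F : ℕ → ℕ → ℝ)
    (r : ℕ → ℝ) (p : ℕ → ℝ) (β : ℕ → ℝ)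
    (hβ : Breakpoints n m c F p β)
    (π : DSC) (hπ : π.Valid n m c F p) :
    ∃ π' : DSC, π'.Valid n m c F p ∧
      (∀ k, 1 ≤ k → k < π'.K → π'.a k ≠ π'.a (k + 1)) ∧
      (∀ k, 1 ≤ k → k + 2 ≤ π'.K → π'.a k ≠ π'.a (k + 2)) ∧
      π'.Util m F r p ≥ π.Util m F r p := by
  induction hK : π.K using Nat.strong_induction_on generalizing π with
  | _ K ih =>
    by_cases hrep : ∃ k, 1 ≤ k ∧ ((k < π.K ∧ π.a k = π.a (k + 1)) ∨
        (k + 2 ≤ π.K ∧ π.a k = π.a (k + 2)))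
    · obtain ⟨σ, hσ, hσK, hle⟩ := DSC.exists_shorter_of_repeat r hβ hπ hrep
      obtain ⟨π', hπ', hadj, hret, hU⟩ := ih σ.K (hK ▸ hσK) σ hσ rfl
      exact ⟨π', hπ', hadj, hret, hle.trans hU⟩
    · push Not at hrep
      exact ⟨π, hπ, fun k hk => (hrep k hk).1, fun k hk => (hrep k hk).2, le_rfl⟩

/-- Every valid `p`-scaled dynamic contract can be rewritten,
without losing principal utility, so that consecutive actions differ and no
action returns after one intermediate segment. -/
theorem no_return_rewriting (n m : ℕ) (c : ℕ → ℝ) (F : ℕ → ℕ → ℝ)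
    (r : ℕ → ℝ) (p : ℕ → ℝ) (β : ℕ → ℝ)
    (hInst : PInstance n m c F r p) (hβ : Breakpoints n m c F p β)
    (π : DSC) (hπ : π.Valid n m c F p) :
    ∃ π' : DSC, π'.Valid n m c F p ∧
      (∀ k, 1 ≤ k → k < π'.K → π'.a k ≠ π'.a (k + 1)) ∧
      (∀ k, 1 ≤ k → k + 2 ≤ π'.K → π'.a k ≠ π'.a (k + 2)) ∧
      π'.Util m F r p ≥ π.Util m F r p :=
  no_return_rewriting_general n m c F r p β hβ π hπ
end
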